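/- Let n ≥ 2, let H be an n×n real symmetric matrix and t₀ a real number such that |(exp(i t₀ H))₁₂| = 1 (perfect state transfer at time t₀). Then there exist a real number θ, integers 0 ≤ ℓ ≤ m ≤ n with m ≥ 1, an n×n real orthogonal matrix Q, positive even integers r₁ ≥ ⋯ ≥ r_ℓ, positive odd integers r_{ℓ+1} ≥ ⋯ ≥ r_m, real numbers c_{m+1}, …, c_n, and positive reals x₁, …, x_m, such that t₀·H = Qᵀ D Q + θ·I, where D is the diagonal matrix diag(πr₁, …, πr_m, c_{m+1}, …, c_n), the first column of Q is (x₁, …, x_m, 0, …, 0)ᵀ, and the second column of Q is (x₁, …, x_ℓ, −x_{ℓ+1}, …, −x_m, 0, …, 0)ᵀ. -/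

import Mathlib

/-
Diagonalise `t₀ H = V diag(μ) Vᵀ` with `V` orthogonal. Then `U = exp(i t₀ H)` is unitary and
`U V = V diag(e^{iμ})`. Since `|U₁₂| = 1`, the first row of `U` is `γ e₂ᵀ`, so
`γ V₂ᵣ = e^{iμᵣ} V₁ᵣ` for every `r`. Writing `γ = e^{iθ}`, wherever `V₁ᵣ ≠ 0` the number
`e^{i(μᵣ - θ)} = V₂ᵣ / V₁ᵣ` is real of modulus one, hence `μᵣ = θ + π kᵣ` and
`V₂ᵣ = (-1)^{kᵣ} V₁ᵣ`; lowering `θ` by a multiple of `2π` makes every `kᵣ` positive. Where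
`V₁ᵣ = 0` also `V₂ᵣ = 0`. Ordering the eigenvectors as (even `kᵣ`, odd `kᵣ`, `V₁ᵣ = 0`), each
block by decreasing eigenvalue, and flipping signs so that the first row of `V` becomes
nonnegative yields `Q`.
-/

open Matrix Finset Real

theorem Complex.exists_lt_exp_mul_I_eq {γ : ℂ} (hγ : ‖γ‖ = 1) (B : ℝ) :
    ∃ θ < B, Complex.exp (θ * Complex.I) = γ := by
  obtain ⟨N, hN⟩ := exists_nat_gt ((Complex.arg γ - B) / (2 * π))
  refine ⟨Complex.arg γ - N * (2 * π), ?_, ?_⟩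
  · rw [div_lt_iff₀ (by positivity)] at hN
    linarith
  · push_cast
    rw [sub_mul, Complex.exp_sub, mul_assoc, Complex.exp_nat_mul_two_pi_mul_I, div_one]
    simpa [hγ] using Complex.norm_mul_exp_arg_mul_I γ

theorem Complex.exists_nat_of_exp_mul_I_mul_eq {θ μ x y : ℝ} (hx : x ≠ 0) (hθμ : θ < μ)
    (h : Complex.exp (θ * Complex.I) * y = x * Complex.exp (μ * Complex.I)) :
    ∃ k : ℕ, 0 < k ∧ μ = θ + π * k ∧ y = (-1 : ℝ) ^ k * x := by
  set w := Complex.exp ((μ - θ : ℝ) * Complex.I) with hw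
  have hyw : (y : ℂ) = x * w := by
    rw [hw, Complex.ofReal_sub, sub_mul, Complex.exp_sub, mul_div_assoc', ← h]
    field_simp
  have hw_real : w = (y / x : ℝ) := by
    have hx' : (x : ℂ) ≠ 0 := by exact_mod_cast hx
    push_cast; rw [hyw, mul_div_cancel_left₀ _ hx']
  -- `w` is real of modulus one, so `w ^ 2 = 1` and `μ - θ` is a multiple of `π`
  have hw_sq : w ^ 2 = 1 := by
    have hnorm : ‖w‖ = 1 := Complex.norm_exp_ofReal_mul_I _
    rw [hw_real, Complex.norm_real, Real.norm_eq_abs] at hnorm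
    rw [hw_real]
    exact_mod_cast (sq_abs (y / x)).symm.trans (by rw [hnorm, one_pow])
  obtain ⟨n, hn⟩ : ∃ n : ℤ, 2 * ((μ - θ : ℝ) * Complex.I) = n * (2 * π * Complex.I) := by
    rw [← Complex.exp_eq_one_iff, two_mul, Complex.exp_add, ← hw, ← sq, hw_sq]
  have hμθ : μ - θ = π * n := by
    have h2I : (2 * Complex.I) ≠ 0 := mul_ne_zero two_ne_zero Complex.I_ne_zero
    exact_mod_cast (mul_left_cancel₀ h2I (by push_cast at hn ⊢; linear_combination hn) :
      ((μ - θ : ℝ) : ℂ) = (π * n : ℝ))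
  have hn_pos : (0 : ℝ) < n := (mul_pos_iff_of_pos_left pi_pos).mp (hμθ ▸ sub_pos.mpr hθμ)
  lift n to ℕ using by exact_mod_cast hn_pos.le
  push_cast at hμθ hn_pos
  refine ⟨n, by exact_mod_cast hn_pos, by linarith, ?_⟩
  have hw_sign : w = (-1) ^ n := by
    rw [hw, hμθ, ← Complex.exp_pi_mul_I, ← Complex.exp_nat_mul]
    push_cast
    ring_nf
  have hy : (y : ℂ) = ((-1 : ℝ) ^ n * x : ℝ) := by
    rw [hyw, hw_sign]; push_cast; ring
  exact_mod_cast hy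

section

variable {ι : Type*} [Fintype ι] [DecidableEq ι]

theorem SemiconjBy.matrix_exp_right {𝕜 : Type*} [RCLike 𝕜] {X A B : Matrix ι ι 𝕜}
    (h : SemiconjBy X A B) : SemiconjBy X (NormedSpace.exp A) (NormedSpace.exp B) := by
  open scoped Matrix.Norms.Operator in exact h.exp_right

theorem Matrix.exp_mem_unitaryGroup {𝕜 : Type*} [RCLike 𝕜] {A : Matrix ι ι 𝕜} (hA : Aᴴ = -A) :
    NormedSpace.exp A ∈ unitaryGroup ι 𝕜 := by
  rw [mem_unitaryGroup_iff, star_eq_conjTranspose, ← exp_conjTranspose, hA,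
    ← exp_add_of_commute _ _ (Commute.refl A).neg_right, add_neg_cancel, NormedSpace.exp_zero]

theorem Matrix.exp_I_smul_map_ofReal_mul {A V : Matrix ι ι ℝ} {μ : ι → ℝ}
    (h : A * V = V * diagonal μ) :
    NormedSpace.exp (Complex.I • A.map (fun x => (x : ℂ))) * V.map (fun x => (x : ℂ)) =
      V.map (fun x => (x : ℂ)) * diagonal (fun r => Complex.exp (μ r * Complex.I)) := by
  have hsemi : SemiconjBy (V.map (fun x => (x : ℂ))) (diagonal (fun r => μ r * Complex.I))
      (Complex.I • A.map (fun x => (x : ℂ))) := by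
    rw [SemiconjBy, smul_mul_assoc]
    ext i j
    have hij : ∑ k, (A i k : ℂ) * V k j = V i j * μ j := by
      have := congrFun (congrFun h i) j
      rw [mul_diagonal, mul_apply] at this
      exact_mod_cast this
    simp only [mul_apply, map_apply, diagonal_apply, mul_ite, mul_zero, sum_ite_eq', mem_univ,
      if_true, smul_apply, smul_eq_mul, hij]
    ring
  have := hsemi.matrix_exp_right
  rw [exp_diagonal, Pi.exp_def] at this
  simpa only [← Complex.exp_eq_exp_ℂ] using this.symm

theorem Matrix.mul_apply_eq_of_norm_apply_eq_one {𝕜 : Type*} [RCLike 𝕜] {U W : Matrix ι ι 𝕜}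
    {e : ι → 𝕜} (hU : U ∈ unitaryGroup ι 𝕜) (h : U * W = W * diagonal e) {a b : ι}
    (hab : ‖U a b‖ = 1) (r : ι) : U a b * W b r = W a r * e r := by
  have hrow : ∀ j ≠ b, U a j = 0 := by
    have hsum : ∑ j, ‖U a j‖ ^ 2 = 1 := by
      have h := congrFun (congrFun (mem_unitaryGroup_iff.mp hU) a) a
      simp only [mul_apply, star_apply, one_apply_eq, ← starRingEnd_apply, RCLike.mul_conj] at h
      exact_mod_cast h
    rw [← add_sum_erase _ _ (mem_univ b), hab, one_pow, add_eq_left,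
      sum_eq_zero_iff_of_nonneg (fun _ _ => by positivity)] at hsum
    intro j hj
    simpa using hsum j (by simp [hj])
  have := congrFun (congrFun h a) r
  rwa [mul_diagonal, mul_apply, sum_eq_single b (fun j _ hj => by rw [hrow j hj, zero_mul])
    (by simp)] at this

theorem Matrix.IsHermitian.exists_orthogonal_diagonalization {A : Matrix ι ι ℝ}
    (hA : A.IsHermitian) :
    ∃ (V : Matrix ι ι ℝ) (μ : ι → ℝ), V * Vᵀ = 1 ∧ A = V * diagonal μ * Vᵀ :=
  ⟨hA.eigenvectorUnitary, hA.eigenvalues,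
    by simpa [star_eq_conjTranspose] using mem_unitaryGroup_iff.mp hA.eigenvectorUnitary.2,
    by simpa [star_eq_conjTranspose] using hA.spectral_theorem⟩

theorem Matrix.IsSymm.exists_diagonalization_of_norm_exp_apply_eq_one {H : Matrix ι ι ℝ}
    (hH : H.IsSymm) {t₀ : ℝ} {a b : ι}
    (hPST : ‖NormedSpace.exp (Complex.I • (t₀ : ℂ) • H.map (fun x => (x : ℂ))) a b‖ = 1) :
    ∃ (θ : ℝ) (V : Matrix ι ι ℝ) (μ : ι → ℝ) (k : ι → ℕ), V * Vᵀ = 1 ∧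
      t₀ • H = V * diagonal μ * Vᵀ ∧
      ∀ r, V b r = (-1 : ℝ) ^ k r * V a r ∧ (V a r ≠ 0 → 0 < k r ∧ μ r = θ + π * k r) := by
  have hA : (t₀ • H).IsHermitian := isHermitian_iff_isSymm.mpr (hH.smul t₀)
  obtain ⟨V, μ, hV, hAV⟩ := hA.exists_orthogonal_diagonalization
  have hAV' : t₀ • H * V = V * diagonal μ := by
    rw [hAV, Matrix.mul_assoc, mul_eq_one_comm.mp hV, Matrix.mul_one]
  set U := NormedSpace.exp (Complex.I • (t₀ • H).map (fun x => (x : ℂ)))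
  have hU : U ∈ unitaryGroup ι ℂ := by
    apply exp_mem_unitaryGroup
    rw [conjTranspose_smul, (hA.map _ fun x => by simp).eq]
    simp
  have hPST' : ‖U a b‖ = 1 := by
    simpa [U, Matrix.map_smul] using hPST
  have hrel := mul_apply_eq_of_norm_apply_eq_one hU (exp_I_smul_map_ofReal_mul hAV') hPST'
  obtain ⟨B, hB⟩ := (Set.finite_range μ).bddBelow
  obtain ⟨θ, hθB, hθ⟩ := Complex.exists_lt_exp_mul_I_eq hPST' B
  have hk : ∀ r, ∃ k : ℕ,
      V b r = (-1 : ℝ) ^ k * V a r ∧ (V a r ≠ 0 → 0 < k ∧ μ r = θ + π * k) := by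
    intro r
    by_cases hr : V a r = 0
    · have hUab : U a b ≠ 0 := norm_ne_zero_iff.mp (hPST' ▸ one_ne_zero)
      have hb := hrel r
      simp only [map_apply, hr, Complex.ofReal_zero, zero_mul, mul_eq_zero, hUab, false_or,
        Complex.ofReal_eq_zero] at hb
      exact ⟨0, by simp [hb, hr], fun h => absurd hr h⟩
    · obtain ⟨k, hk, hμ, hb⟩ := Complex.exists_nat_of_exp_mul_I_mul_eq hr
        (hθB.trans_le (hB ⟨r, rfl⟩)) (by simpa only [map_apply, ← hθ] using hrel r)
      exact ⟨k, hb, fun _ => ⟨hk, hμ⟩⟩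
  choose k hk using hk
  exact ⟨θ, V, μ, k, hV, hAV, hk⟩

theorem Matrix.exists_apply_ne_zero_of_mul_transpose_eq_one {R : Type*} [NonAssocSemiring R]
    [Nontrivial R] {V : Matrix ι ι R} (hV : V * Vᵀ = 1) (a : ι) : ∃ r, V a r ≠ 0 := by
  by_contra! h
  simpa [mul_apply, h] using congrFun (congrFun hV a) a

theorem Matrix.submatrix_mul_diagonal_mul_transpose {R : Type*} [CommRing R] (V : Matrix ι ι R)
    (σ : Equiv.Perm ι) {s : ι → R} (hs : ∀ i, s i * s i = 1) (μ : ι → R) :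
    V.submatrix id σ * diagonal s * diagonal (μ ∘ σ) * (V.submatrix id σ * diagonal s)ᵀ =
      V * diagonal μ * Vᵀ := by
  ext i j
  simp only [mul_apply, diagonal_apply, transpose_apply, submatrix_apply, id, mul_ite, mul_zero,
    sum_ite_eq', mem_univ, if_true, Function.comp_apply]
  rw [← Equiv.sum_comp σ (fun k => V i k * μ k * V j k)]
  refine sum_congr rfl fun r _ => ?_
  linear_combination (V i (σ r) * μ (σ r) * V j (σ r)) * hs r

theorem Matrix.transpose_mul_diagonal_sub_mul_add_smul {R : Type*} [CommRing R]
    {Q : Matrix ι ι R} (hQ : Qᵀ * Q = 1) (d : ι → R) (θ : R) :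
    Qᵀ * diagonal (fun i => d i - θ) * Q + θ • 1 = Qᵀ * diagonal d * Q := by
  have hd : diagonal d = diagonal (fun i => d i - θ) + θ • 1 := by
    rw [smul_one_eq_diagonal, diagonal_add]
    simp
  rw [hd, Matrix.mul_add, Matrix.add_mul, Matrix.mul_smul, Matrix.smul_mul, Matrix.mul_one, hQ]

theorem Matrix.exists_signed_permutation_of_mul_transpose_eq_one {V : Matrix ι ι ℝ}
    (hV : V * Vᵀ = 1) (σ : Equiv.Perm ι) (a : ι) :
    ∃ (Q : Matrix ι ι ℝ) (s : ι → ℝ), Qᵀ * Q = 1 ∧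
      (∀ ν, Qᵀ * diagonal (ν ∘ σ) * Q = V * diagonal ν * Vᵀ) ∧
      (∀ i b, Q i b = V b (σ i) * s i) ∧ ∀ i, V a (σ i) * s i = |V a (σ i)| := by
  set s : ι → ℝ := fun i => if V a (σ i) < 0 then -1 else 1
  have hs : ∀ i, s i * s i = 1 := fun i => by by_cases h : V a (σ i) < 0 <;> simp [s, h]
  have hW : ∀ ν, (V.submatrix id σ * diagonal s) * diagonal (ν ∘ σ) *
      (V.submatrix id σ * diagonal s)ᵀ = V * diagonal ν * Vᵀ :=
    V.submatrix_mul_diagonal_mul_transpose σ hs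
  refine ⟨(V.submatrix id σ * diagonal s)ᵀ, s, ?_, ?_, fun i b => mul_diagonal _ _ _ _, fun i => ?_⟩
  · simpa [hV] using hW 1
  · simpa only [transpose_transpose] using hW
  · by_cases h : V a (σ i) < 0
    · simp [s, h, abs_of_neg h]
    · simp [s, h, abs_of_nonneg (not_lt.mp h)]

end

theorem Fin.le_iff_lt_card_filter_of_monotone {n : ℕ} {α : Type*} [Preorder α] [DecidableLE α]
    {f : Fin n → α} (hf : Monotone f) (t : α) (i : Fin n) :
    f i ≤ t ↔ (i : ℕ) < #{j | f j ≤ t} := by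
  constructor
  · intro h
    calc (i : ℕ) < #(Iic i) := by simp
      _ ≤ #{j | f j ≤ t} := card_le_card fun j hj => by
        simp only [mem_Iic, mem_filter, mem_univ, true_and] at hj ⊢
        exact (hf hj).trans h
  · intro h
    by_contra hi
    have : #{j | f j ≤ t} ≤ #(Iio i) := card_le_card fun j hj => by
      simp only [mem_Iio, mem_filter, mem_univ, true_and] at hj ⊢
      exact lt_of_not_ge fun hij => hi ((hf hij).trans hj)
    simp only [card_Iio] at this
    omega

theorem Fin.exists_perm_lex_sorted {n : ℕ} {α β : Type*} [LinearOrder α] [LinearOrder β]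
    (c : Fin n → α) (g : Fin n → β) : ∃ σ : Equiv.Perm (Fin n),
      (∀ t i, c (σ i) ≤ t ↔ (i : ℕ) < #{r | c r ≤ t}) ∧
      ∀ i j, i ≤ j → c (σ i) = c (σ j) → g (σ j) ≤ g (σ i) := by
  let key : Fin n → α ×ₗ βᵒᵈ := fun r => toLex (c r, OrderDual.toDual (g r))
  have hkey : ∀ {i j}, i ≤ j → key (Tuple.sort key i) ≤ key (Tuple.sort key j) :=
    fun hij => Tuple.monotone_sort key hij
  refine ⟨Tuple.sort key, fun t i => ?_, fun i j hij hc => ?_⟩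
  · have hc : Monotone (c ∘ Tuple.sort key) := fun i j hij =>
      (Prod.Lex.monotone_fst _ _ (hkey hij) : _)
    rw [← card_equiv (Tuple.sort key) (s := {j | c (Tuple.sort key j) ≤ t}) (by simp)]
    exact Fin.le_iff_lt_card_filter_of_monotone hc t i
  · simpa [key, hc] using Prod.Lex.toLex_le_toLex.mp (hkey hij)

theorem Fin.exists_perm_three_blocks {n : ℕ} {β : Type*} [LinearOrder β] (P E : Fin n → Prop)
    [DecidablePred P] [DecidablePred E] (g : Fin n → β) :
    ∃ (σ : Equiv.Perm (Fin n)) (ℓ m : ℕ), ℓ ≤ m ∧ m ≤ n ∧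
      (∀ i : Fin n, (i : ℕ) < ℓ ↔ P (σ i) ∧ E (σ i)) ∧
      (∀ i : Fin n, (i : ℕ) < m ↔ P (σ i)) ∧
      (∀ i j : Fin n, i ≤ j → (j : ℕ) < ℓ → g (σ j) ≤ g (σ i)) ∧
      (∀ i j : Fin n, ℓ ≤ (i : ℕ) → i ≤ j → (j : ℕ) < m → g (σ j) ≤ g (σ i)) := by
  set c : Fin n → ℕ := fun r => if P r then (if E r then 0 else 1) else 2
  have hc₀ : ∀ r, c r ≤ 0 ↔ P r ∧ E r := fun r => by
    by_cases hP : P r <;> by_cases hE : E r <;> simp [c, hP, hE]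
  have hc₁ : ∀ r, c r ≤ 1 ↔ P r := fun r => by
    by_cases hP : P r <;> by_cases hE : E r <;> simp [c, hP, hE]
  obtain ⟨σ, hσc, hσg⟩ := Fin.exists_perm_lex_sorted c g
  refine ⟨σ, #{r | c r ≤ 0}, #{r | c r ≤ 1},
    card_le_card fun r => by simp only [mem_filter, mem_univ, true_and]; omega,
    (card_filter_le _ _).trans (by simp), fun i => (hσc 0 i).symm.trans (hc₀ _),
    fun i => (hσc 1 i).symm.trans (hc₁ _), fun i j hij hj => hσg i j hij ?_,
    fun i j hi hij hj => hσg i j hij ?_⟩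
  · have hci := (hσc 0 i).mpr (lt_of_le_of_lt hij hj)
    have hcj := (hσc 0 j).mpr hj
    omega
  · have hci := (hσc 1 i).mpr (lt_of_le_of_lt hij hj)
    have hcj := (hσc 1 j).mpr hj
    have hci' := (hσc 0 i).not.mpr (not_lt.mpr hi)
    have hcj' := (hσc 0 j).not.mpr (not_lt.mpr (hi.trans hij))
    omega

/-- Proposition (spectral decomposition under PST): if `|(exp(i t₀ H))₁₂| = 1` for a real
symmetric `H`, then `t₀ H = Qᵀ D Q + θ I` where `D` is diagonal with the first `ℓ`
diagonal entries positive even multiples of `π` (in decreasing order), the next `m - ℓ`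
entries positive odd multiples of `π` (in decreasing order), the remaining entries
arbitrary reals, and the first two columns of `Q` are
`(x₁, …, x_m, 0, …, 0)ᵀ` and `(x₁, …, x_ℓ, -x_{ℓ+1}, …, -x_m, 0, …, 0)ᵀ` with `xᵢ > 0`. -/
theorem stmt6 {n : ℕ} (hn : 2 ≤ n) (H : Matrix (Fin n) (Fin n) ℝ) (hH : H.IsSymm)
    (t₀ : ℝ)
    (hPST : ‖
       ((NormedSpace.exp (Complex.I • (t₀ : ℂ) • H.map (fun x => (x : ℂ))))
         ⟨0, by omega⟩ ⟨1, by omega⟩)‖ = 1) :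
    ∃ (θ : ℝ) (ℓ m : ℕ), ℓ ≤ m ∧ 1 ≤ m ∧ m ≤ n ∧
      ∃ (Q : Matrix (Fin n) (Fin n) ℝ) (d : Fin n → ℝ) (x : Fin n → ℝ),
        Qᵀ * Q = 1 ∧
        t₀ • H = Qᵀ * Matrix.diagonal d * Q + θ • (1 : Matrix (Fin n) (Fin n) ℝ) ∧
        (∀ i : Fin n, (i : ℕ) < ℓ →
          ∃ k : ℕ, 0 < k ∧ Even k ∧ d i = Real.pi * k) ∧
        (∀ i : Fin n, ℓ ≤ (i : ℕ) → (i : ℕ) < m →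
          ∃ k : ℕ, 0 < k ∧ Odd k ∧ d i = Real.pi * k) ∧
        (∀ i j : Fin n, i ≤ j → (j : ℕ) < ℓ → d j ≤ d i) ∧
        (∀ i j : Fin n, ℓ ≤ (i : ℕ) → i ≤ j → (j : ℕ) < m → d j ≤ d i) ∧
        (∀ i : Fin n, (i : ℕ) < m → 0 < x i) ∧
        (∀ i : Fin n, Q i ⟨0, by omega⟩ = if (i : ℕ) < m then x i else 0) ∧
        (∀ i : Fin n, Q i ⟨1, by omega⟩ =
          if (i : ℕ) < ℓ then x i else if (i : ℕ) < m then -x i else 0) := by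
  obtain ⟨θ, V, μ, k, hV, hA, hVk⟩ := hH.exists_diagonalization_of_norm_exp_apply_eq_one hPST
  set e₀ : Fin n := ⟨0, by omega⟩
  obtain ⟨σ, ℓ, m, hℓm, hmn, hℓ, hm, hμ₀, hμ₁⟩ :=
    Fin.exists_perm_three_blocks (fun r => V e₀ r ≠ 0) (fun r => Even (k r)) μ
  obtain ⟨Q, s, hQ, hQV, hQ_apply, hs⟩ :=
    exists_signed_permutation_of_mul_transpose_eq_one hV σ e₀
  have hodd : ∀ i : Fin n, ℓ ≤ (i : ℕ) → (i : ℕ) < m → V e₀ (σ i) ≠ 0 ∧ Odd (k (σ i)) :=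
    fun i hi₁ hi₂ => ⟨(hm i).mp hi₂, Nat.not_even_iff_odd.mp fun h =>
      not_lt.mpr hi₁ ((hℓ i).mpr ⟨(hm i).mp hi₂, h⟩)⟩
  have hd : ∀ i, V e₀ (σ i) ≠ 0 → 0 < k (σ i) ∧ μ (σ i) - θ = π * k (σ i) := fun i h => by
    obtain ⟨hk, hμ⟩ := (hVk (σ i)).2 h
    exact ⟨hk, by rw [hμ]; ring⟩
  refine ⟨θ, ℓ, m, hℓm, ?_, hmn, Q, fun i => μ (σ i) - θ, fun i => |V e₀ (σ i)|, hQ, ?_,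
    fun i hi => ?_, fun i hi₁ hi₂ => ?_, fun i j hij hj => sub_le_sub_right (hμ₀ i j hij hj) θ,
    fun i j hi hij hj => sub_le_sub_right (hμ₁ i j hi hij hj) θ,
    fun i hi => abs_pos.mpr ((hm i).mp hi), fun i => ?_, fun i => ?_⟩
  · obtain ⟨r, hr⟩ := exists_apply_ne_zero_of_mul_transpose_eq_one hV e₀
    exact Nat.one_le_of_lt ((hm (σ.symm r)).mpr (by simpa using hr))
  · rw [hA, ← hQV]
    exact (transpose_mul_diagonal_sub_mul_add_smul hQ _ θ).symm
  · obtain ⟨hne, hev⟩ := (hℓ i).mp hi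
    exact ⟨k (σ i), (hd i hne).1, hev, (hd i hne).2⟩
  · obtain ⟨hne, hk⟩ := hodd i hi₁ hi₂
    exact ⟨k (σ i), (hd i hne).1, hk, (hd i hne).2⟩
  · rw [hQ_apply, hs]
    split_ifs with h
    · rfl
    · simp [not_not.mp ((hm i).not.mp h)]
  · rw [hQ_apply, (hVk _).1, mul_assoc, hs]
    split_ifs with h₁ h₂
    · rw [((hℓ i).mp h₁).2.neg_one_pow, one_mul]
    · rw [(hodd i (not_lt.mp h₁) h₂).2.neg_one_pow, neg_one_mul]
    · simp [not_not.mp ((hm i).not.mp h₂)]
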